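/- arXiv:2010.03727 — 3 statements merged into one kernel-verified Lean document; each statement's English description precedes it below -/
import Mathlib

section
/- For all real x with 0 ≤ x < 4/27, ∑_{n=0}^∞ binom(3n, n) xⁿ = 2·cos((1/3)·arccos(1 − 27x/2)/2)/√(4 − 27x), that is, ∑_{n=0}^∞ C(3n,n) xⁿ = 2 cos(arccos(1 − 27x/2)/6)/√(4 − 27x). -/
open PowerSeries Finset Nat Real

private noncomputable def bb : ℕ → ℝ
  | 0 => 1
  | n + 1 => ∑ i : Fin (n + 1), ∑ j : Fin (n + 1 - (i : ℕ)), bb i * bb j * bb (n - i - j)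
  decreasing_by
  · exact i.is_lt
  · have := j.is_lt; omega
  · have := i.is_lt; omega

private lemma bb_succ (n : ℕ) : bb (n + 1) =
    ∑ i ∈ range (n + 1), ∑ j ∈ range (n - i + 1), bb i * bb j * bb (n - i - j) := by
  rw [bb]
  rw [← Finset.sum_range fun i => ∑ j : Fin (n + 1 - i), bb i * bb j * bb (n - i - j)]
  refine Finset.sum_congr rfl fun i hi => ?_
  have hi' : i ≤ n := by simpa [Nat.lt_succ_iff] using hi
  have h : n + 1 - i = n - i + 1 := by omega
  rw [h, ← Finset.sum_range fun j => bb i * bb j * bb (n - i - j)]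

private noncomputable def Bs : ℝ⟦X⟧ := PowerSeries.mk bb

private lemma coeff_Bs (n : ℕ) : (coeff n) Bs = bb n := coeff_mk n bb

private lemma coeff_Bs3 (n : ℕ) : (coeff n) (Bs ^ 3) = bb (n + 1) := by
  have h3 : Bs ^ 3 = Bs * (Bs * Bs) := by ring
  rw [h3, coeff_mul, Finset.Nat.sum_antidiagonal_eq_sum_range_succ_mk, bb_succ]
  refine Finset.sum_congr rfl fun i hi => ?_
  rw [coeff_Bs, coeff_mul, Finset.Nat.sum_antidiagonal_eq_sum_range_succ_mk, Finset.mul_sum]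
  refine Finset.sum_congr rfl fun j hj => ?_
  rw [coeff_Bs, coeff_Bs]
  ring

private lemma hBs : Bs = 1 + X * Bs ^ 3 := by
  ext n
  cases n with
  | zero => simp [coeff_Bs, bb]
  | succ n =>
    rw [map_add, coeff_succ_X_mul, coeff_Bs3, coeff_Bs]
    simp [coeff_one]

private lemma hcB : constantCoeff Bs = 1 := by
  rw [← coeff_zero_eq_constantCoeff, coeff_Bs]
  simp [bb]

private noncomputable def Fs : ℝ⟦X⟧ := Bs * (3 - 2 * Bs)⁻¹

private lemma hcU : constantCoeff (3 - 2 * Bs : ℝ⟦X⟧) = 1 := by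
  rw [map_sub, map_mul, map_ofNat, map_ofNat, hcB]
  norm_num

private lemma hUne : (3 - 2 * Bs : ℝ⟦X⟧) ≠ 0 := by
  intro h
  have := hcU
  rw [h, map_zero] at this
  exact one_ne_zero this.symm

private lemma hBne : Bs ≠ 0 := by
  intro h
  have := hcB
  rw [h, map_zero] at this
  exact one_ne_zero this.symm

private lemma hXB : X * Bs ^ 3 = Bs - 1 := by linear_combination -hBs

private lemma hFs : Fs * (3 - 2 * Bs) = Bs := by
  rw [Fs, mul_assoc, mul_comm ((3 - 2*Bs)⁻¹),
    PowerSeries.mul_inv_cancel _ (by rw [hcU]; norm_num), mul_one]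

local notation "Dd" => d⁄dX ℝ

private lemma hD3 : Dd (3 : ℝ⟦X⟧) = 0 := by
  rw [show (3:ℝ⟦X⟧) = ((3:ℕ):ℝ⟦X⟧) by norm_num]
  exact Derivation.map_natCast _ 3

private lemma hD2 : Dd (2 : ℝ⟦X⟧) = 0 := by
  rw [show (2:ℝ⟦X⟧) = ((2:ℕ):ℝ⟦X⟧) by norm_num]
  exact Derivation.map_natCast _ 2

private lemma e1 : Dd Bs = X * (3 * Bs ^ 2 * Dd Bs) + Bs ^ 3 := by
  conv_lhs => rw [hBs]
  rw [map_add, Derivation.map_one_eq_zero, zero_add, Derivation.leibniz, Derivation.leibniz_pow,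
    derivative_X, smul_eq_mul, smul_eq_mul, smul_eq_mul, mul_one]
  push_cast
  ring

private lemma hdB : Dd Bs * (3 - 2 * Bs) = Bs ^ 4 := by
  linear_combination Bs * e1 + 3 * Dd Bs * hXB

private lemma e2 : (3 - 2 * Bs) * Dd Fs - 2 * Fs * Dd Bs = Dd Bs := by
  have h := congrArg (Dd ·) hFs
  simp only [Derivation.leibniz, smul_eq_mul, map_sub, hD3, hD2, mul_zero, zero_sub, zero_add,
    mul_neg, neg_mul] at h
  linear_combination h

private lemma hdF : Dd Fs * (3 - 2 * Bs) ^ 2 = 3 * Dd Bs := by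
  linear_combination (3 - 2*Bs) * e2 + 2 * Dd Bs * hFs

private lemma hd2B : Dd (Dd Bs) * (3 - 2 * Bs) = 4 * Bs ^ 3 * Dd Bs + 2 * (Dd Bs) ^ 2 := by
  have h := congrArg (Dd ·) hdB
  simp only [Derivation.leibniz, Derivation.leibniz_pow, smul_eq_mul, map_sub, hD3, hD2, mul_zero,
    zero_sub, zero_add, mul_neg, neg_mul] at h
  push_cast at h
  linear_combination h

private lemma hd2F :
    Dd (Dd Fs) * (3 - 2 * Bs) ^ 2 - 4 * Dd Fs * (3 - 2 * Bs) * Dd Bs = 3 * Dd (Dd Bs) := by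
  have h := congrArg (Dd ·) hdF
  simp only [Derivation.leibniz, Derivation.leibniz_pow, smul_eq_mul, map_sub, hD3, hD2, mul_zero,
    zero_sub, zero_add, mul_neg, neg_mul] at h
  push_cast at h
  linear_combination h

set_option maxHeartbeats 2000000 in
private lemma hODE : X * (4 - 27 * X) * Dd (Dd Fs) + (2 - 54 * X) * Dd Fs - 6 * Fs = 0 := by
  set K := FractionRing ℝ⟦X⟧
  have hinj : Function.Injective (algebraMap ℝ⟦X⟧ K) := IsFractionRing.injective _ _
  apply hinj
  simp only [map_add, map_sub, map_mul, map_ofNat, map_zero]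
  set x := algebraMap ℝ⟦X⟧ K X with hxdef
  set b := algebraMap ℝ⟦X⟧ K Bs
  set f := algebraMap ℝ⟦X⟧ K Fs
  set db := algebraMap ℝ⟦X⟧ K (Dd Bs)
  set df := algebraMap ℝ⟦X⟧ K (Dd Fs)
  set d2b := algebraMap ℝ⟦X⟧ K (Dd (Dd Bs))
  set d2f := algebraMap ℝ⟦X⟧ K (Dd (Dd Fs))
  have hbne : b ≠ 0 := fun h => hBne (hinj (by rw [map_zero]; exact h))
  have hune : (3 : K) - 2 * b ≠ 0 := by
    intro h
    apply hUne
    apply hinj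
    simpa [map_sub, map_mul, map_ofNat] using h
  have K1 : x * b ^ 3 = b - 1 := by
    have := congrArg (algebraMap ℝ⟦X⟧ K) hXB
    simpa [map_mul, map_pow, map_sub, map_one] using this
  have K2 : db * (3 - 2 * b) = b ^ 4 := by
    have := congrArg (algebraMap ℝ⟦X⟧ K) hdB
    simpa [map_mul, map_pow, map_sub, map_ofNat] using this
  have K3 : df * (3 - 2 * b) ^ 2 = 3 * db := by
    have := congrArg (algebraMap ℝ⟦X⟧ K) hdF
    simpa [map_mul, map_pow, map_sub, map_ofNat] using this
  have K4 : d2b * (3 - 2 * b) = 4 * b ^ 3 * db + 2 * db ^ 2 := by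
    have := congrArg (algebraMap ℝ⟦X⟧ K) hd2B
    simpa [map_mul, map_pow, map_sub, map_add, map_ofNat] using this
  have K5 : d2f * (3 - 2 * b) ^ 2 - 4 * df * (3 - 2 * b) * db = 3 * d2b := by
    have := congrArg (algebraMap ℝ⟦X⟧ K) hd2F
    simpa [map_mul, map_pow, map_sub, map_ofNat] using this
  have K6 : f * (3 - 2 * b) = b := by
    have := congrArg (algebraMap ℝ⟦X⟧ K) hFs
    simpa [map_mul, map_sub, map_ofNat] using this
  have hdf_v : df * (3 - 2*b)^3 = 3 * b^4 := by
    linear_combination (3 - 2*b) * K3 + 3 * K2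
  have hd2b_v : d2b * (3 - 2*b)^3 = 4*b^7*(3 - 2*b) + 2*b^8 := by
    linear_combination (3 - 2*b)^2 * K4 + (4*b^3*(3 - 2*b) + 2*(db*(3 - 2*b) + b^4)) * K2
  have hd2f_v : d2f * (3 - 2*b)^5 = 12*b^7*(3 - 2*b) + 18*b^8 := by
    linear_combination (3 - 2*b)^3 * K5 + 3 * hd2b_v + 4*db*(3 - 2*b) * hdf_v + 12*b^4 * K2
  have key : (x*(4 - 27*x)*d2f + (2 - 54*x)*df - 6*f) * ((3 - 2*b)^5 * b^6) = 0 := by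
    linear_combination x*(4 - 27*x)*b^6 * hd2f_v + (2 - 54*x)*b^6*(3 - 2*b)^2 * hdf_v
      - 6*(3 - 2*b)^4*b^6 * K6
      + ((4*b^3 - 27*(x*b^3 + b - 1))*(12*b^7*(3 - 2*b) + 18*b^8) - 162*b^7*(3 - 2*b)^2) * K1
  have hne : ((3 - 2*b)^5 * b^6 : K) ≠ 0 :=
    mul_ne_zero (pow_ne_zero _ hune) (pow_ne_zero _ hbne)
  have := (mul_eq_zero.mp key).resolve_right hne
  linear_combination this

private noncomputable def aa (n : ℕ) : ℝ := ((3 * n).choose n : ℝ)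

private lemma aa_rec (n : ℕ) :
    2 * ((n:ℝ) + 1) * (2 * n + 1) * aa (n + 1) = 3 * (3 * (n:ℝ) + 1) * (3 * (n:ℝ) + 2) * aa n := by
  have e1 : aa (n + 1) = ((3*n+3)! : ℝ) / ((n+1)! * (2*n+2)!) := by
    rw [aa, show 3 * (n+1) = 3*n+3 by ring, Nat.cast_choose ℝ (by omega),
      show 3*n+3 - (n+1) = 2*n+2 by omega]
  have e2 : aa n = ((3*n)! : ℝ) / (n ! * (2*n)!) := by
    rw [aa, Nat.cast_choose ℝ (by omega), show 3*n - n = 2*n by omega]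
  rw [e1, e2]
  have f1 : ((3*n+3)! : ℝ) = (3*(n:ℝ)+3) * (3*(n:ℝ)+2) * (3*(n:ℝ)+1) * (3*n)! := by
    rw [show 3*n+3 = (3*n+2)+1 by ring, Nat.factorial_succ,
      show 3*n+2 = (3*n+1)+1 by ring, Nat.factorial_succ,
      show 3*n+1 = (3*n)+1 by ring, Nat.factorial_succ]
    push_cast; ring
  have f2 : ((n+1)! : ℝ) = ((n:ℝ)+1) * n ! := by rw [Nat.factorial_succ]; push_cast; ring
  have f3 : ((2*n+2)! : ℝ) = (2*(n:ℝ)+2) * (2*(n:ℝ)+1) * (2*n)! := by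
    rw [show 2*n+2 = (2*n+1)+1 by ring, Nat.factorial_succ,
      show 2*n+1 = (2*n)+1 by ring, Nat.factorial_succ]
    push_cast; ring
  rw [f1, f2, f3]
  have hn : (n ! : ℝ) ≠ 0 := Nat.cast_ne_zero.mpr (Nat.factorial_ne_zero n)
  have h2n : ((2*n)! : ℝ) ≠ 0 := Nat.cast_ne_zero.mpr (Nat.factorial_ne_zero _)
  have hn1 : ((n:ℝ)+1) ≠ 0 := by positivity
  have h2n1 : (2*(n:ℝ)+1) ≠ 0 := by positivity
  have h2n2 : (2*(n:ℝ)+2) ≠ 0 := by positivity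
  field_simp

private lemma coeff_X_mul_eq (ps : ℝ⟦X⟧) (m : ℕ) :
    (coeff m) (X * ps) = if m = 0 then 0 else (coeff (m - 1)) ps := by
  cases m with
  | zero => simp [coeff_zero_eq_constantCoeff]
  | succ m => rw [coeff_succ_X_mul]; simp

private lemma coeff_D (ps : ℝ⟦X⟧) (m : ℕ) :
    (coeff m) (Dd ps) = (coeff (m+1)) ps * (m+1) := coeff_derivative ps m

private lemma Fsrec (n : ℕ) :
    2*((n:ℝ)+1)*(2*(n:ℝ)+1) * (coeff (n+1)) Fs
      = 3*(3*(n:ℝ)+1)*(3*(n:ℝ)+2) * (coeff n) Fs := by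
  have h : (4:ℝ) • (X*Dd (Dd Fs)) + (2:ℝ) • (Dd Fs) -
      ((27:ℝ) • (X*(X*Dd (Dd Fs))) + (54:ℝ) • (X*(Dd Fs)) + (6:ℝ) • Fs) = 0 := by
    simp only [Algebra.smul_def, map_ofNat]
    linear_combination hODE
  have hc := congrArg (coeff n) h
  simp only [map_add, map_sub, map_smul, map_zero, smul_eq_mul, coeff_X_mul_eq, coeff_D] at hc
  match n with
  | 0 =>
    norm_num at hc ⊢
    linear_combination hc
  | 1 =>
    norm_num at hc ⊢
    linear_combination hc
  | (k+2) =>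
    have h1 : ¬ (k + 2 = 0) := by omega
    have h2 : ¬ (k + 1 = 0) := by omega
    simp only [if_neg h1, if_neg h2, Nat.add_sub_cancel, coeff_X_mul_eq, coeff_D,
      show k+2-1 = k+1 by omega, show k+1-1 = k by omega] at hc
    rw [show k+1+1+1 = k+3 by omega, show k+1+1 = k+2 by omega] at hc
    rw [show k+2+1 = k+3 by omega] at hc ⊢
    push_cast at hc ⊢
    linear_combination hc

private noncomputable def As : ℝ⟦X⟧ := PowerSeries.mk aa

private lemma coeff_Fs (n : ℕ) : (coeff n) Fs = aa n := by
  induction n with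
  | zero =>
    have h := congrArg (constantCoeff) hFs
    rw [map_mul, hcU, hcB, mul_one] at h
    rw [coeff_zero_eq_constantCoeff, h]
    simp [aa]
  | succ n ih =>
    have h := Fsrec n
    rw [ih] at h
    have h2 := aa_rec n
    have hne : (2 * ((n:ℝ) + 1) * (2 * n + 1)) ≠ 0 := by positivity
    have := h.trans h2.symm
    exact mul_left_cancel₀ hne this

private lemma hFsAs : Fs = As := by
  ext n
  rw [coeff_Fs, As, coeff_mk]

private lemma hAs : As * (3 - 2 * Bs) = Bs := by rw [← hFsAs]; exact hFs

private lemma main_ps : (4 - 27 * X) * As ^ 3 = 3 * As + 1 := by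
  have hcancel : ∀ y z : ℝ⟦X⟧, y * (3 - 2*Bs)^3 = z * (3 - 2*Bs)^3 → y = z := by
    intro y z h
    exact mul_right_cancel₀ (pow_ne_zero 3 hUne) h
  apply hcancel
  have e1 : (4 - 27 * X) * As ^ 3 * (3 - 2*Bs)^3 = (4 - 27*X) * Bs^3 := by
    rw [show (4 - 27 * X) * As ^ 3 * (3 - 2*Bs)^3 = (4 - 27*X) * (As * (3 - 2*Bs))^3 from by ring,
      hAs]
  rw [e1]
  have e2 : (3 * As + 1) * (3 - 2*Bs)^3 = (Bs+3) * (3 - 2*Bs)^2 := by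
    have h : (3 * As + 1) * (3 - 2*Bs) = Bs + 3 := by
      linear_combination 3 * hAs
    calc (3 * As + 1) * (3 - 2*Bs)^3 = ((3 * As + 1) * (3 - 2*Bs)) * (3 - 2*Bs)^2 := by ring
    _ = (Bs+3) * (3 - 2*Bs)^2 := by rw [h]
  rw [e2]
  linear_combination (-27 : ℝ⟦X⟧) * hXB

private lemma coeff_identity (n : ℕ) :
    4 * (coeff n) (As^3) - 27 * (if n = 0 then 0 else (coeff (n-1)) (As^3))
      = 3 * aa n + (if n = 0 then 1 else 0) := by
  have h : (4:ℝ) • (As^3) - (27:ℝ) • (X * As^3) = (3:ℝ) • As + 1 := by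
    simp only [Algebra.smul_def, map_ofNat]
    linear_combination main_ps
  have hc := congrArg (coeff n) h
  simp only [map_add, map_sub, map_smul, smul_eq_mul] at hc
  cases n with
  | zero =>
    rw [if_pos rfl, if_pos rfl]
    have hX0 : (coeff 0) (X * As^3) = 0 := by
      rw [coeff_zero_eq_constantCoeff, map_mul, constantCoeff_X, zero_mul]
    have hA0 : (coeff 0) As = aa 0 := by rw [As, coeff_mk]
    have h1 : (coeff 0) (1:ℝ⟦X⟧) = 1 := by simp
    have ha0 : aa 0 = 1 := by simp [aa]
    rw [hX0, hA0, h1, ha0] at hc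
    rw [ha0]
    linear_combination hc
  | succ m =>
    have h0 : m + 1 ≠ 0 := Nat.succ_ne_zero m
    simp only [if_neg h0, Nat.add_sub_cancel]
    rw [coeff_succ_X_mul] at hc
    rw [show (coeff (m+1)) As = aa (m+1) from by rw [As, coeff_mk]] at hc
    have h1 : (coeff (m+1)) (1 : ℝ⟦X⟧) = 0 := by
      rw [coeff_one]; simp
    rw [h1] at hc
    linear_combination hc

private lemma aa_nonneg (n : ℕ) : 0 ≤ aa n := Nat.cast_nonneg _

private lemma aa_le (n : ℕ) : aa n ≤ (27/4) ^ n := by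
  induction n with
  | zero => simp [aa]
  | succ n ih =>
    have hrec := aa_rec n
    have hn : (0:ℝ) ≤ (n:ℝ) := Nat.cast_nonneg n
    have hpos : (0:ℝ) < 2 * ((n:ℝ)+1) * (2*(n:ℝ)+1) := by positivity
    have step : aa (n+1) ≤ (27/4) * aa n := by
      nlinarith [aa_nonneg n, aa_nonneg (n+1), mul_nonneg hn (aa_nonneg n)]
    calc aa (n+1) ≤ (27/4) * aa n := step
    _ ≤ (27/4) * (27/4)^n := by nlinarith [ih]
    _ = (27/4)^(n+1) := by ring

private noncomputable def cc (n : ℕ) : ℝ := (coeff n) (As ^ 3)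

private noncomputable def g2 (n : ℕ) : ℝ := ∑ kl ∈ Finset.HasAntidiagonal.antidiagonal n, aa kl.1 * aa kl.2

private lemma hsum_aa {x : ℝ} (hx0 : 0 ≤ x) (hx1 : x < 4/27) :
    Summable (fun n => aa n * x ^ n) := by
  have hr0 : (0:ℝ) ≤ 27 * x / 4 := by linarith
  have hr1 : 27 * x / 4 < 1 := by linarith
  apply Summable.of_nonneg_of_le (fun n => mul_nonneg (aa_nonneg n) (pow_nonneg hx0 n))
    (fun n => ?_) (summable_geometric_of_lt_one hr0 hr1)
  calc aa n * x ^ n ≤ (27/4)^n * x^n := by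
        apply mul_le_mul_of_nonneg_right (aa_le n) (pow_nonneg hx0 n)
  _ = (27 * x / 4)^n := by rw [← mul_pow]; ring_nf

private lemma hsum_aa_norm {x : ℝ} (hx0 : 0 ≤ x) (hx1 : x < 4/27) :
    Summable (fun n => ‖aa n * x ^ n‖) := by
  have h : (fun n => ‖aa n * x ^ n‖) = fun n => aa n * x ^ n :=
    funext fun n => by
      rw [Real.norm_eq_abs, abs_of_nonneg (mul_nonneg (aa_nonneg n) (pow_nonneg hx0 n))]
  rw [h]
  exact hsum_aa hx0 hx1

private lemma g2_expand (x : ℝ) (n : ℕ) :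
    ∑ kl ∈ Finset.HasAntidiagonal.antidiagonal n, (aa kl.1 * x ^ kl.1) * (aa kl.2 * x ^ kl.2) = g2 n * x ^ n := by
  rw [g2, Finset.sum_mul]
  refine Finset.sum_congr rfl fun kl hkl => ?_
  have h := Finset.HasAntidiagonal.mem_antidiagonal.mp hkl
  rw [← h, pow_add]
  ring

private lemma cc_eq (n : ℕ) : cc n = ∑ kl ∈ Finset.HasAntidiagonal.antidiagonal n, g2 kl.1 * aa kl.2 := by
  rw [cc, show As^3 = As * As * As from by ring, coeff_mul]
  refine Finset.sum_congr rfl fun kl hkl => ?_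
  rw [coeff_mul]
  congr 1
  · rw [g2]
    refine Finset.sum_congr rfl fun pq hpq => ?_
    rw [As, coeff_mk, coeff_mk]
  · rw [As, coeff_mk]

private lemma cc_expand (x : ℝ) (n : ℕ) :
    ∑ kl ∈ Finset.HasAntidiagonal.antidiagonal n, (g2 kl.1 * x ^ kl.1) * (aa kl.2 * x ^ kl.2) = cc n * x ^ n := by
  rw [cc_eq, Finset.sum_mul]
  refine Finset.sum_congr rfl fun kl hkl => ?_
  have h := Finset.HasAntidiagonal.mem_antidiagonal.mp hkl
  rw [← h, pow_add]
  ring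

private lemma f2_eq {x : ℝ} (hx0 : 0 ≤ x) (hx1 : x < 4/27) :
    (∑' n, aa n * x ^ n) * (∑' n, aa n * x ^ n) = ∑' n, g2 n * x ^ n := by
  rw [tsum_mul_tsum_eq_tsum_sum_antidiagonal_of_summable_norm (hsum_aa_norm hx0 hx1)
    (hsum_aa_norm hx0 hx1)]
  exact tsum_congr fun n => g2_expand x n

private lemma g2_norm_summable {x : ℝ} (hx0 : 0 ≤ x) (hx1 : x < 4/27) :
    Summable (fun n => ‖g2 n * x ^ n‖) := by
  have h := summable_norm_sum_mul_antidiagonal_of_summable_norm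
    (hsum_aa_norm hx0 hx1) (hsum_aa_norm hx0 hx1)
  apply Summable.congr h
  intro n
  rw [g2_expand x n]

private lemma f3_eq {x : ℝ} (hx0 : 0 ≤ x) (hx1 : x < 4/27) :
    (∑' n, aa n * x ^ n) ^ 3 = ∑' n, cc n * x ^ n := by
  rw [show ((∑' n, aa n * x ^ n) ^ 3 : ℝ)
      = ((∑' n, aa n * x ^ n) * (∑' n, aa n * x ^ n)) * (∑' n, aa n * x ^ n) from by ring,
    f2_eq hx0 hx1,
    tsum_mul_tsum_eq_tsum_sum_antidiagonal_of_summable_norm (g2_norm_summable hx0 hx1)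
      (hsum_aa_norm hx0 hx1)]
  exact tsum_congr fun n => cc_expand x n

private lemma cc_summable {x : ℝ} (hx0 : 0 ≤ x) (hx1 : x < 4/27) :
    Summable (fun n => cc n * x ^ n) := by
  have h := summable_norm_sum_mul_antidiagonal_of_summable_norm
    (g2_norm_summable hx0 hx1) (hsum_aa_norm hx0 hx1)
  have h2 := h.of_norm
  apply Summable.congr h2
  intro n
  rw [cc_expand x n]

set_option maxHeartbeats 1000000 in
private lemma cubic_f {x : ℝ} (hx0 : 0 ≤ x) (hx1 : x < 4/27) :
    (4 - 27 * x) * (∑' n, aa n * x ^ n) ^ 3 = 3 * (∑' n, aa n * x ^ n) + 1 := by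
  set f := ∑' n, aa n * x ^ n with hf
  set S := ∑' n, cc n * x ^ n with hS
  have hf3 : f ^ 3 = S := f3_eq hx0 hx1
  set G : ℕ → ℝ := fun n => (4 * cc n - 3 * aa n) * x ^ n - (if n = 0 then 1 else 0) with hG
  have hcc0 : cc 0 = (coeff 0) (As^3) := rfl
  have ha0 : aa 0 = 1 := by simp [aa]
  have hA0 : (constantCoeff) As = 1 := by
    rw [← coeff_zero_eq_constantCoeff, As, coeff_mk, ha0]
  have hcc0v : cc 0 = 1 := by
    rw [hcc0, coeff_zero_eq_constantCoeff, map_pow, hA0]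
    norm_num
  have hG0 : G 0 = 0 := by
    simp only [hG]
    norm_num [hcc0v, ha0]
  have hGs : ∀ n, G (n+1) = 27 * cc n * x ^ (n+1) := by
    intro n
    have h := coeff_identity (n+1)
    have h0 : n + 1 ≠ 0 := Nat.succ_ne_zero n
    rw [if_neg h0, if_neg h0, Nat.add_sub_cancel] at h
    have hc1 : (coeff (n+1)) (As^3) = cc (n+1) := rfl
    have hc2 : (coeff n) (As^3) = cc n := rfl
    rw [hc1, hc2] at h
    simp only [hG, if_neg h0]
    linear_combination (x^(n+1)) * h
  have hsum_d : Summable (fun n => (if n = 0 then (1:ℝ) else 0)) := by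
    apply summable_of_ne_finset_zero (s := {0})
    intro b hb
    simp only [Finset.mem_singleton] at hb
    rw [if_neg hb]
  have h1s : Summable (fun n => 4 * (cc n * x ^ n)) := (cc_summable hx0 hx1).mul_left 4
  have h2s : Summable (fun n => 3 * (aa n * x ^ n)) := (hsum_aa hx0 hx1).mul_left 3
  have hsumG : Summable G :=
    ((h1s.sub h2s).sub hsum_d).congr (fun n => by simp only [hG]; ring)
  have h3 : ∑' n, G n = 4 * S - 3 * f - 1 := by
    have e : ∀ n, G n
        = (4*(cc n * x^n) - 3*(aa n * x^n)) - (if n = 0 then (1:ℝ) else 0) := fun n => by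
      simp only [hG]; ring
    calc ∑' n, G n
        = ∑' n, ((4*(cc n*x^n) - 3*(aa n*x^n)) - (if n = 0 then (1:ℝ) else 0)) := tsum_congr e
      _ = (∑' n, (4*(cc n*x^n) - 3*(aa n*x^n))) - ∑' n, (if n = 0 then (1:ℝ) else 0) :=
          Summable.tsum_sub (h1s.sub h2s) hsum_d
      _ = ((∑' n, 4*(cc n*x^n)) - ∑' n, 3*(aa n*x^n)) - 1 := by
          rw [Summable.tsum_sub h1s h2s, tsum_ite_eq]
      _ = 4 * S - 3 * f - 1 := by rw [tsum_mul_left, tsum_mul_left, ← hS, ← hf]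
  have key : ∑' n, 27 * cc n * x ^ (n+1) = 4 * S - 3 * f - 1 := by
    have h1 : ∑' n, 27 * cc n * x^(n+1) = ∑' n, G (n+1) := tsum_congr fun n => (hGs n).symm
    have h2 := Summable.tsum_eq_zero_add hsumG
    rw [h1, ← h3, h2, hG0]
    ring
  have hxS : 27 * x * S = ∑' n, 27 * cc n * x ^ (n+1) := by
    rw [hS, ← tsum_mul_left]
    exact tsum_congr fun n => by rw [pow_succ]; ring
  have hfinal : (4 - 27*x) * S = 3 * f + 1 := by
    have h4 : (4 - 27*x) * S = 4 * S - 27 * x * S := by ring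
    rw [h4, hxS, key]
    ring
  rw [hf3]
  exact hfinal

private lemma cubic_unique {u y z : ℝ} (hu : 0 < u) (hy : 0 < y) (hz : 0 < z)
    (h1 : u * y ^ 3 = 3 * y + 1) (h2 : u * z ^ 3 = 3 * z + 1) : y = z := by
  by_contra hne
  have hq : (y - z) * (u * (y ^ 2 + y * z + z ^ 2) - 3) = 0 := by linear_combination h1 - h2
  rcases mul_eq_zero.mp hq with h | h
  · exact hne (by linarith [sub_eq_zero.mp h])
  · have hy2 : u * y ^ 2 > 3 := by nlinarith
    have p1 : 0 < u * (y * z) := by positivity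
    have p2 : 0 < u * z ^ 2 := by positivity
    nlinarith

private lemma g_pos_and_cubic {x : ℝ} (hx0 : 0 ≤ x) (hx1 : x < 4/27) :
    0 < 2 * Real.cos (Real.arccos (1 - 27 * x / 2) / 6) / Real.sqrt (4 - 27 * x) ∧
    (4 - 27 * x) * (2 * Real.cos (Real.arccos (1 - 27 * x / 2) / 6) / Real.sqrt (4 - 27 * x)) ^ 3
      = 3 * (2 * Real.cos (Real.arccos (1 - 27 * x / 2) / 6) / Real.sqrt (4 - 27 * x)) + 1 := by
  have hu : (0:ℝ) < 4 - 27 * x := by linarith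
  set θ := Real.arccos (1 - 27 * x / 2) with hθ
  have hm1 : (-1:ℝ) ≤ 1 - 27 * x / 2 := by linarith
  have hm2 : (1 - 27 * x / 2 : ℝ) ≤ 1 := by linarith
  have hθ0 : 0 ≤ θ := Real.arccos_nonneg _
  have hθπ : θ ≤ π := Real.arccos_le_pi _
  have hcosθ : Real.cos θ = 1 - 27 * x / 2 := Real.cos_arccos hm1 hm2
  set s := Real.sqrt (4 - 27 * x) with hsdef
  have hs : 0 < s := Real.sqrt_pos.mpr hu
  have hs2 : s ^ 2 = 4 - 27 * x := Real.sq_sqrt hu.le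
  set c := Real.cos (θ / 6) with hc
  have hπ : (0:ℝ) < π := Real.pi_pos
  have hcpos : 0 < c := by
    apply Real.cos_pos_of_mem_Ioo
    constructor
    · linarith
    · linarith
  have hchalf : 0 ≤ Real.cos (θ / 2) := by
    apply Real.cos_nonneg_of_mem_Icc
    constructor
    · linarith
    · linarith
  have hsq : (2 * Real.cos (θ / 2)) ^ 2 = s ^ 2 := by
    have h := Real.cos_sq (θ / 2)
    rw [show 2 * (θ / 2) = θ by ring] at h
    rw [hs2]
    nlinarith [h, hcosθ]
  have hhalf : 2 * Real.cos (θ / 2) = s := by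
    have h1 : 2 * Real.cos (θ / 2) = Real.sqrt ((2 * Real.cos (θ / 2)) ^ 2) :=
      (Real.sqrt_sq (by linarith)).symm
    rw [h1, hsq, Real.sqrt_sq hs.le]
  have htriple : Real.cos (θ / 2) = 4 * c ^ 3 - 3 * c := by
    rw [show θ / 2 = 3 * (θ / 6) by ring]
    exact Real.cos_three_mul _
  have h8c3 : 8 * c ^ 3 = s + 6 * c := by
    rw [← hhalf, htriple]; ring
  constructor
  · positivity
  · rw [← hs2]
    field_simp
    linear_combination h8c3

theorem binom3n_generating_function (x : ℝ) (hx0 : 0 ≤ x) (hx1 : x < 4 / 27) :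
    ∑' n : ℕ, (Nat.choose (3 * n) n : ℝ) * x ^ n =
      2 * Real.cos (Real.arccos (1 - 27 * x / 2) / 6) / Real.sqrt (4 - 27 * x) := by
  have hfeq : ∑' n : ℕ, (Nat.choose (3 * n) n : ℝ) * x ^ n = ∑' n, aa n * x ^ n :=
    tsum_congr fun n => by rw [aa]
  rw [hfeq]
  have hfpos : 0 < ∑' n, aa n * x ^ n := by
    have h0 : aa 0 * x ^ 0 ≤ ∑' n, aa n * x ^ n :=
      Summable.le_tsum (hsum_aa hx0 hx1) 0 (fun j _ => mul_nonneg (aa_nonneg j) (pow_nonneg hx0 j))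
    have h1 : aa 0 * x ^ 0 = 1 := by simp [aa]
    linarith
  obtain ⟨hgpos, hgcubic⟩ := g_pos_and_cubic hx0 hx1
  exact cubic_unique (by linarith : (0:ℝ) < 4 - 27*x) hfpos hgpos (cubic_f hx0 hx1) hgcubic
end

section
/- For every real z with 0 ≤ z < 1, z · ∑_{n=0}^∞ (1/2)ₙ (n!)³/((2)ₙ)³ · zⁿ/n! = −4·Li₂(1/2 − √(1−z)/2) − 8√(1−z) + 2 log²(√(1−z)+1) − 4 log 2 · log(√(1−z)+1) + 8 log(√(1−z)+1) + 8 + 2 log²2 − 8 log 2. -/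
noncomputable def poch (a : ℝ) (n : ℕ) : ℝ := ∏ i ∈ Finset.range n, (a + i)

/-- Dilogarithm `Li₂(x) = ∑_{k ≥ 1} x^k / k²`. -/
noncomputable def Li2 (x : ℝ) : ℝ := ∑' k : ℕ, x ^ (k + 1) / ((k : ℝ) + 1)^2

/-!
Write `z = 4x` with `x = t(1-t)` and `t = (1 - √(1-z))/2 ∈ [0, 1/2)`. Since `(1/2)ₙ 4ⁿ = C(2n,n) n!`
and `(2)ₙ = (n+1)!`, the left side is `4 x G₃(x)`, where `G_k(x) = ∑ C(2n,n) xⁿ / (n+1)ᵏ`.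
Dividing the coefficients by `n+1` is integration in `x`, `(x G_{k+1})' = G_k`, and in the
variable `t` this reads `d/dt (x G_{k+1}(x)) = (1-2t) G_k(x)`. The recurrence of the central
binomial coefficients gives `(1-4x) G₀' = 2 G₀`, which with `(1-2t)² = 1-4x` yields
`(1-2t) G₀ = 1`; three integrations from `t = 0` then give `x G₁ = t`,
`x G₂ = log(1-t) + 2t` and `x G₃ = -Li₂(t) + log²(1-t)/2 + 2 log(1-t) + 4t`.
-/

open Real Set

theorem hasDerivAt_tsum_div_succ_mul_pow_succ {a : ℕ → ℝ} {r x : ℝ}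
    (ha : Summable fun n => |a n| * r ^ n) (hx : |x| < r) :
    HasDerivAt (fun y => ∑' n : ℕ, a n / (n + 1) * y ^ (n + 1)) (∑' n : ℕ, a n * x ^ n) x := by
  have hr : 0 < r := (abs_nonneg x).trans_lt hx
  refine hasDerivAt_tsum_of_isPreconnected (g := fun n y => a n / (n + 1) * y ^ (n + 1))
    (g' := fun n y => a n * y ^ n) ha isOpen_Ioo isPreconnected_Ioo
    (fun n y _ => ?_) (fun n y hy => ?_) (show (0 : ℝ) ∈ Ioo (-r) r from ⟨neg_lt_zero.2 hr, hr⟩)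
    ?_ (abs_lt.1 hx)
  · have hn : (n : ℝ) + 1 ≠ 0 := by positivity
    refine ((hasDerivAt_pow (n + 1) y).const_mul (a n / (n + 1))).congr_deriv ?_
    rw [Nat.add_sub_cancel]
    push_cast
    field_simp
  · rw [norm_mul, norm_pow, Real.norm_eq_abs, Real.norm_eq_abs]
    gcongr
    exact (abs_lt.2 hy).le
  · simp

theorem summable_abs_mul_pow_of_abs_le {c : ℕ → ℝ} {C r : ℝ}
    (hc : ∀ n, |c n| ≤ C * ((n + 1) * 4 ^ n)) (hr0 : 0 ≤ r) (hr : r < 1 / 4) :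
    Summable fun n => |c n| * r ^ n := by
  have hq : ‖4 * r‖ < 1 := by rw [Real.norm_eq_abs, abs_of_nonneg (by positivity)]; linarith
  have hgeom : Summable fun n : ℕ => C * ((n + 1) * (4 * r) ^ n) := by
    refine (((hasSum_coe_mul_geometric_of_norm_lt_one hq).summable.add
      (summable_geometric_of_norm_lt_one hq)).mul_left C).congr fun n => ?_
    ring
  refine .of_nonneg_of_le (fun n => by positivity) (fun n => ?_) hgeom
  rw [mul_pow, ← mul_assoc, ← mul_assoc]
  gcongr
  simpa only [mul_assoc] using hc n

theorem summable_mul_pow_of_abs_le {c : ℕ → ℝ} {C x : ℝ}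
    (hc : ∀ n, |c n| ≤ C * ((n + 1) * 4 ^ n)) (hx : |x| < 1 / 4) :
    Summable fun n => c n * x ^ n :=
  .of_norm <| (summable_abs_mul_pow_of_abs_le hc (abs_nonneg x) hx).congr fun n => by
    rw [norm_mul, norm_pow, Real.norm_eq_abs, Real.norm_eq_abs]

noncomputable def centralBinomSeries (k : ℕ) (x : ℝ) : ℝ :=
  ∑' n : ℕ, (n.centralBinom : ℝ) / ((n : ℝ) + 1) ^ k * x ^ n

theorem cast_centralBinom_le_four_pow (n : ℕ) : (n.centralBinom : ℝ) ≤ 4 ^ n := by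
  exact_mod_cast n.centralBinom_le_four_pow

theorem cast_succ_mul_centralBinom_succ (n : ℕ) :
    ((n : ℝ) + 1) * (n + 1).centralBinom = 2 * (2 * n + 1) * n.centralBinom := by
  exact_mod_cast n.succ_mul_centralBinom_succ

theorem abs_centralBinom_div_le (k n : ℕ) :
    |(n.centralBinom : ℝ) / ((n : ℝ) + 1) ^ k| ≤ 1 * ((n + 1) * 4 ^ n) := by
  rw [abs_of_nonneg (by positivity), one_mul]
  calc (n.centralBinom : ℝ) / ((n : ℝ) + 1) ^ k ≤ n.centralBinom :=
        div_le_self (by positivity) (one_le_pow₀ (by simp))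
    _ ≤ 4 ^ n := cast_centralBinom_le_four_pow n
    _ ≤ (n + 1) * 4 ^ n := le_mul_of_one_le_left (by positivity) (by simp)

theorem hasDerivAt_mul_centralBinomSeries_succ (k : ℕ) {x : ℝ} (hx : |x| < 1 / 4) :
    HasDerivAt (fun y => y * centralBinomSeries (k + 1) y) (centralBinomSeries k x) x := by
  have hseries : (fun y => y * centralBinomSeries (k + 1) y) = fun y =>
      ∑' n : ℕ, (n.centralBinom : ℝ) / ((n : ℝ) + 1) ^ k / (n + 1) * y ^ (n + 1) := by
    funext y
    rw [centralBinomSeries, ← tsum_mul_left]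
    congr 1
    funext n
    rw [pow_succ, pow_succ, div_div]
    ring
  rw [hseries]
  exact hasDerivAt_tsum_div_succ_mul_pow_succ
    (summable_abs_mul_pow_of_abs_le (abs_centralBinom_div_le k) (r := (|x| + 1 / 4) / 2)
      (by positivity) (by linarith)) (by linarith)

theorem centralBinomSeries_zero_eq_one_add {x : ℝ} (hx : |x| < 1 / 4) :
    centralBinomSeries 0 x =
      1 + ∑' n : ℕ, 2 * (2 * n + 1) * (n.centralBinom : ℝ) / (n + 1) * x ^ (n + 1) := by
  rw [centralBinomSeries,
    (summable_mul_pow_of_abs_le (abs_centralBinom_div_le 0) hx).tsum_eq_zero_add]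
  congr 1
  · simp
  · congr 1
    funext n
    rw [← cast_succ_mul_centralBinom_succ]
    field_simp

theorem one_sub_four_mul_mul_tsum_eq {x : ℝ} (hx : |x| < 1 / 4) :
    (1 - 4 * x) * ∑' n : ℕ, 2 * (2 * n + 1) * (n.centralBinom : ℝ) * x ^ n =
      2 * centralBinomSeries 0 x := by
  have hGs := summable_mul_pow_of_abs_le (abs_centralBinom_div_le 0) hx
  have hEs : Summable fun n : ℕ => (n * n.centralBinom : ℝ) * x ^ n := by
    refine summable_mul_pow_of_abs_le (C := 1) (fun n => ?_) hx
    rw [abs_of_nonneg (by positivity), one_mul]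
    gcongr
    · linarith
    · exact cast_centralBinom_le_four_pow n
  have hsplit : ∑' n : ℕ, 2 * (2 * n + 1) * (n.centralBinom : ℝ) * x ^ n =
      4 * ∑' n : ℕ, (n * n.centralBinom : ℝ) * x ^ n + 2 * centralBinomSeries 0 x := by
    rw [centralBinomSeries, ← tsum_mul_left, ← tsum_mul_left,
      ← (hEs.mul_left 4).tsum_add (hGs.mul_left 2)]
    congr 1
    funext n
    ring
  have hshift : ∑' n : ℕ, (n * n.centralBinom : ℝ) * x ^ n =
      x * ∑' n : ℕ, 2 * (2 * n + 1) * (n.centralBinom : ℝ) * x ^ n := by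
    rw [hEs.tsum_eq_zero_add, ← tsum_mul_left]
    simp only [CharP.cast_eq_zero, zero_mul, zero_add, ← cast_succ_mul_centralBinom_succ]
    congr 1
    funext n
    push_cast
    ring
  linear_combination hsplit + 4 * hshift

theorem hasDerivAt_centralBinomSeries_zero {x : ℝ} (hx : |x| < 1 / 4) :
    HasDerivAt (centralBinomSeries 0) (2 * centralBinomSeries 0 x / (1 - 4 * x)) x := by
  have ha (n : ℕ) : |2 * (2 * n + 1) * (n.centralBinom : ℝ)| ≤ 4 * ((n + 1) * 4 ^ n) := by
    rw [abs_of_nonneg (by positivity)]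
    calc 2 * (2 * n + 1) * (n.centralBinom : ℝ) ≤ 2 * (2 * n + 1) * 4 ^ n := by
          gcongr
          exact cast_centralBinom_le_four_pow n
      _ ≤ 4 * ((n + 1) * 4 ^ n) := by nlinarith [pow_pos (by norm_num : (0 : ℝ) < 4) n]
  -- The reindexing needs summability, so the two expressions for the series agree only near `x`.
  have hG : centralBinomSeries 0 =ᶠ[nhds x]
      fun y => 1 + ∑' n : ℕ, 2 * (2 * n + 1) * (n.centralBinom : ℝ) / (n + 1) * y ^ (n + 1) := by
    filter_upwards [(isOpen_lt continuous_abs continuous_const).mem_nhds hx] with y hy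
    exact centralBinomSeries_zero_eq_one_add hy
  refine (((hasDerivAt_tsum_div_succ_mul_pow_succ
    (summable_abs_mul_pow_of_abs_le ha (r := (|x| + 1 / 4) / 2) (by positivity) (by linarith))
    (by linarith)).const_add 1).congr_of_eventuallyEq hG).congr_deriv ?_
  rw [eq_div_iff (by linarith [(abs_lt.1 hx).2]), mul_comm]
  exact one_sub_four_mul_mul_tsum_eq hx

theorem centralBinomSeries_zero_right (k : ℕ) : centralBinomSeries k 0 = 1 := by
  rw [centralBinomSeries, tsum_eq_single 0 fun n hn => by simp [hn]]
  simp

theorem eq_of_hasDerivAt_eq {f g f' g' : ℝ → ℝ} {a b : ℝ} (hab : a ≤ b)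
    (hf : ∀ y ∈ Icc a b, HasDerivAt f (f' y) y) (hg : ∀ y ∈ Icc a b, HasDerivAt g (g' y) y)
    (hfg : ∀ y ∈ Ioo a b, f' y = g' y) (ha : f a = g a) : f b = g b := by
  rcases hab.eq_or_lt with rfl | hlt
  · exact ha
  have hcont : ContinuousOn (fun y => f y - g y) (Icc a b) :=
    continuousOn_of_forall_continuousAt fun y hy => ((hf y hy).sub (hg y hy)).continuousAt
  obtain ⟨c, hc, hslope⟩ := exists_hasDerivAt_eq_slope (fun y => f y - g y) (fun _ => 0) hlt
    hcont fun y hy =>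
      ((hf y (Ioo_subset_Icc_self hy)).sub (hg y (Ioo_subset_Icc_self hy))).congr_deriv
        (sub_eq_zero.2 (hfg y hy))
  rw [eq_comm, div_eq_zero_iff, sub_eq_zero, sub_eq_zero] at hslope
  rcases hslope with h | h <;> linarith

theorem abs_mul_one_sub_lt {t : ℝ} (ht0 : 0 ≤ t) (ht : t < 1 / 2) : |t * (1 - t)| < 1 / 4 := by
  rw [abs_of_nonneg (mul_nonneg ht0 (by linarith))]
  nlinarith [pow_pos (by linarith : 0 < 1 / 2 - t) 2]

theorem hasDerivAt_mul_one_sub (y : ℝ) : HasDerivAt (fun s => s * (1 - s)) (1 - 2 * y) y :=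
  ((hasDerivAt_id' y).mul ((hasDerivAt_id' y).const_sub 1)).congr_deriv (by ring)

theorem hasDerivAt_log_one_sub {y : ℝ} (hy : y < 1) :
    HasDerivAt (fun s => log (1 - s)) (-1 / (1 - y)) y :=
  ((hasDerivAt_id' y).const_sub 1).log (sub_ne_zero.2 hy.ne')

theorem hasDerivAt_centralBinomSeries_succ_comp (k : ℕ) {y : ℝ} (hy0 : 0 ≤ y) (hy : y < 1 / 2) :
    HasDerivAt (fun s => s * (1 - s) * centralBinomSeries (k + 1) (s * (1 - s)))
      (centralBinomSeries k (y * (1 - y)) * (1 - 2 * y)) y := by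
  have h := (hasDerivAt_mul_centralBinomSeries_succ k (abs_mul_one_sub_lt hy0 hy)).comp y
    (hasDerivAt_mul_one_sub y)
  exact h

theorem one_sub_two_mul_mul_centralBinomSeries_zero {t : ℝ} (ht0 : 0 ≤ t) (ht : t < 1 / 2) :
    (1 - 2 * t) * centralBinomSeries 0 (t * (1 - t)) = 1 := by
  have hderiv (y : ℝ) (hy : y ∈ Icc 0 t) :
      HasDerivAt (fun s => (1 - 2 * s) * centralBinomSeries 0 (s * (1 - s))) 0 y := by
    have hx := abs_mul_one_sub_lt hy.1 (hy.2.trans_lt ht)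
    have h4 : 1 - 4 * (y * (1 - y)) ≠ 0 := by linarith [(abs_lt.1 hx).2]
    have hG := (hasDerivAt_centralBinomSeries_zero hx).comp y (hasDerivAt_mul_one_sub y)
    refine ((((hasDerivAt_id' y).const_mul 2).const_sub 1).mul hG).congr_deriv ?_
    simp only [Function.comp]
    rw [mul_comm _ (1 - 2 * y), ← mul_assoc, ← sq, show (1 - 2 * y) ^ 2 = 1 - 4 * (y * (1 - y)) by
      ring, mul_div_cancel₀ _ h4]
    ring
  exact eq_of_hasDerivAt_eq ht0 hderiv (fun y _ => hasDerivAt_const y 1) (fun _ _ => rfl)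
      (by simp [centralBinomSeries_zero_right])

theorem mul_centralBinomSeries_one {t : ℝ} (ht0 : 0 ≤ t) (ht : t < 1 / 2) :
    t * (1 - t) * centralBinomSeries 1 (t * (1 - t)) = t :=
  eq_of_hasDerivAt_eq ht0
    (fun y hy => hasDerivAt_centralBinomSeries_succ_comp 0 hy.1 (hy.2.trans_lt ht))
    (fun y _ => hasDerivAt_id' y)
    (fun y hy => by
      rw [mul_comm]
      exact one_sub_two_mul_mul_centralBinomSeries_zero hy.1.le (hy.2.trans ht))
    (by simp)

theorem mul_centralBinomSeries_two {t : ℝ} (ht0 : 0 ≤ t) (ht : t < 1 / 2) :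
    t * (1 - t) * centralBinomSeries 2 (t * (1 - t)) = log (1 - t) + 2 * t :=
  eq_of_hasDerivAt_eq ht0
    (fun y hy => hasDerivAt_centralBinomSeries_succ_comp 1 hy.1 (hy.2.trans_lt ht))
    (fun y hy => (hasDerivAt_log_one_sub (by linarith [hy.2])).add
      ((hasDerivAt_id' y).const_mul 2))
    (fun y hy => by
      have hy1 : 1 - y ≠ 0 := by linarith [hy.2]
      have h := mul_centralBinomSeries_one hy.1.le (hy.2.trans ht)
      have hG : (1 - y) * centralBinomSeries 1 (y * (1 - y)) = 1 :=
        mul_left_cancel₀ hy.1.ne' (by linear_combination h)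
      field_simp
      linear_combination (1 - 2 * y) * hG)
    (by simp)

theorem summable_abs_one_div_succ_mul_pow {r : ℝ} (hr0 : 0 ≤ r) (hr : r < 1) :
    Summable fun n : ℕ => |1 / ((n : ℝ) + 1)| * r ^ n :=
  .of_nonneg_of_le (fun n => by positivity)
    (fun n => mul_le_of_le_one_left (by positivity) (by
      rw [abs_of_pos (by positivity)]
      exact div_le_one_of_le₀ (by simp) (by positivity)))
    (summable_geometric_of_lt_one hr0 hr)

theorem hasDerivAt_Li2 {y : ℝ} (hy : |y| < 1) :
    HasDerivAt Li2 (∑' n : ℕ, y ^ n / (n + 1)) y := by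
  have hseries : Li2 = fun x => ∑' n : ℕ, 1 / ((n : ℝ) + 1) / (n + 1) * x ^ (n + 1) := by
    funext x
    rw [Li2]
    congr 1
    funext n
    field_simp
  rw [hseries]
  refine (hasDerivAt_tsum_div_succ_mul_pow_succ (r := (|y| + 1) / 2)
    (summable_abs_one_div_succ_mul_pow (by positivity) (by linarith)) (by linarith)).congr_deriv ?_
  congr 1
  funext n
  ring

theorem mul_tsum_pow_div_succ {y : ℝ} (hy : |y| < 1) :
    y * ∑' n : ℕ, y ^ n / (n + 1) = -log (1 - y) := by
  rw [← (hasSum_pow_div_log_of_abs_lt_one hy).tsum_eq, ← tsum_mul_left]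
  congr 1
  funext n
  ring

theorem mul_centralBinomSeries_three {t : ℝ} (ht0 : 0 ≤ t) (ht : t < 1 / 2) :
    t * (1 - t) * centralBinomSeries 3 (t * (1 - t)) =
      -Li2 t + log (1 - t) ^ 2 / 2 + 2 * log (1 - t) + 4 * t :=
  eq_of_hasDerivAt_eq ht0
    (fun y hy => hasDerivAt_centralBinomSeries_succ_comp 2 hy.1 (hy.2.trans_lt ht))
    (fun y hy =>
      have hlog := hasDerivAt_log_one_sub (y := y) (by linarith [hy.2])
      ((((hasDerivAt_Li2 (by rw [abs_lt]; constructor <;> linarith [hy.1, hy.2])).neg.add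
        ((hlog.pow 2).div_const 2)).add (hlog.const_mul 2)).add ((hasDerivAt_id' y).const_mul 4)))
    (fun y hy => by
      have hy1 : 1 - y ≠ 0 := by linarith [hy.2]
      have hyabs : |y| < 1 := by rw [abs_lt]; constructor <;> linarith [hy.1, hy.2]
      have h2 := mul_centralBinomSeries_two hy.1.le (hy.2.trans ht)
      have hL := mul_tsum_pow_div_succ hyabs
      apply mul_left_cancel₀ (mul_ne_zero hy.1.ne' hy1)
      field_simp
      linear_combination 2 * (1 - 2 * y) * h2 + 2 * (1 - y) * hL)
    (by simp [Li2])

open Nat in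
theorem poch_two (n : ℕ) : poch 2 n = (n + 1)! := by
  induction n with
  | zero => simp [poch]
  | succ n ih =>
    rw [poch, Finset.prod_range_succ, ← poch, ih, factorial_succ (n + 1)]
    push_cast
    ring

open Nat in
theorem poch_half_mul_four_pow (n : ℕ) : poch (1 / 2) n * 4 ^ n = n.centralBinom * n ! := by
  induction n with
  | zero => simp [poch]
  | succ n ih =>
    rw [poch, Finset.prod_range_succ, ← poch, factorial_succ, pow_succ]
    push_cast
    linear_combination (4 * ((1 : ℝ) / 2 + n)) * ih - n ! * cast_succ_mul_centralBinom_succ n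

open Nat in
theorem tsum_poch_half_div_poch_two_pow_three (x : ℝ) :
    ∑' n : ℕ, poch (1 / 2) n * (n ! : ℝ) ^ 3 / (poch 2 n) ^ 3 * (4 * x) ^ n / n ! =
      centralBinomSeries 3 x := by
  rw [centralBinomSeries]
  congr 1
  funext n
  rw [poch_two, eq_div_of_mul_eq (by positivity) (poch_half_mul_four_pow n)]
  push_cast [factorial_succ]
  field_simp
  ring

theorem fourF3_half_one_polylog (z : ℝ) (hz0 : 0 ≤ z) (hz1 : z < 1) :
    z * ∑' n : ℕ,
        poch (1/2) n * ((Nat.factorial n : ℝ))^3 / ((poch 2 n)^3) * z ^ n / (Nat.factorial n) =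
      -4 * Li2 (1/2 - Real.sqrt (1 - z) / 2) - 8 * Real.sqrt (1 - z)
        + 2 * (Real.log (Real.sqrt (1 - z) + 1))^2
        - 4 * Real.log 2 * Real.log (Real.sqrt (1 - z) + 1)
        + 8 * Real.log (Real.sqrt (1 - z) + 1) + 8
        + 2 * (Real.log 2)^2 - 8 * Real.log 2 := by
  have hu : √(1 - z) ^ 2 = 1 - z := sq_sqrt (by linarith)
  have hu0 : 0 < √(1 - z) := sqrt_pos.2 (by linarith)
  have hu1 : √(1 - z) ≤ 1 := sqrt_le_one.2 (by linarith)
  generalize √(1 - z) = u at *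
  obtain ⟨t, rfl⟩ : ∃ t, u = 1 - 2 * t := ⟨(1 - u) / 2, by ring⟩
  obtain rfl : z = 4 * (t * (1 - t)) := by linear_combination hu
  have hlog : log (1 - 2 * t + 1) = log 2 + log (1 - t) := by
    rw [show 1 - 2 * t + 1 = 2 * (1 - t) by ring, log_mul two_ne_zero (by linarith)]
  rw [tsum_poch_half_div_poch_two_pow_three, mul_assoc,
    mul_centralBinomSeries_three (by linarith) (by linarith), hlog,
    show 1 / 2 - (1 - 2 * t) / 2 = t by ring]
  ring
end

section
/- ∑_{n=0}^∞ (5/4)ₙ(7/4)ₙ((2)ₙ)⁴/(((1)ₙ)⁴(3/2)ₙ n!) · (1/4)ⁿ = 31/(2592√6) + 4921/(96√2). -/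
open Finset

lemma poch_succ (a : ℝ) (n : ℕ) : poch a (n + 1) = poch a n * (a + n) :=
  prod_range_succ _ _

lemma poch_pos {a : ℝ} (ha : 0 < a) (n : ℕ) : 0 < poch a n :=
  prod_pos fun i _ ↦ by positivity

lemma poch_eq_ascPochhammer_eval (a : ℝ) (n : ℕ) : poch a n = (ascPochhammer ℝ n).eval a := by
  induction n with
  | zero => simp [poch]
  | succ n ih => rw [poch_succ, ascPochhammer_succ_eval, ih]

lemma ring_choose_eq_poch_div_factorial (a : ℝ) (n : ℕ) :
    Ring.choose (a + n - 1) n = poch a n / n.factorial := by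
  rw [Ring.choose_eq_smul, Polynomial.descPochhammer_smeval_eq_ascPochhammer,
    Polynomial.ascPochhammer_smeval_eq_eval, show a + n - 1 - n + 1 = a by ring,
    poch_eq_ascPochhammer_eval, smul_eq_mul, inv_mul_eq_div]

lemma hasSum_poch_div_factorial_mul_pow (a : ℝ) {x : ℝ} (hx : |x| < 1) :
    HasSum (fun n ↦ poch a n / n.factorial * x ^ n) (1 / (1 - x) ^ a) := by
  have h := (Real.one_div_one_sub_rpow_hasFPowerSeriesOnBall_zero a).hasSum
    (y := x) (by simpa [edist_dist, Real.dist_eq] using hx)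
  simpa [FormalMultilinearSeries.ofScalars_apply_eq, ring_choose_eq_poch_div_factorial, mul_comm]
    using h

lemma cast_centralBinom_succ (m : ℕ) :
    (Nat.centralBinom (m + 1) : ℝ) = 2 * (2 * m + 1) * Nat.centralBinom m / (m + 1) := by
  rw [eq_div_iff (by positivity), mul_comm]
  exact_mod_cast Nat.succ_mul_centralBinom_succ m

lemma four_pow_mul_poch_half (n : ℕ) :
    4 ^ n * poch (1 / 2) n = Nat.centralBinom n * n.factorial := by
  induction n with
  | zero => simp [poch]
  | succ n ih =>
    rw [poch_succ, Nat.factorial_succ, pow_succ, cast_centralBinom_succ]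
    push_cast
    field_simp
    linear_combination (4 * (2 * n + 1)) * ih

lemma hasSum_centralBinom_mul_pow {y : ℝ} (hy : |y| < 1 / 4) :
    HasSum (fun q ↦ (Nat.centralBinom q : ℝ) * y ^ q) (1 / √(1 - 4 * y)) := by
  have h := hasSum_poch_div_factorial_mul_pow (1 / 2) (x := 4 * y)
    (by rw [abs_mul, abs_of_pos four_pos]; linarith)
  rw [← Real.sqrt_eq_rpow] at h
  refine h.congr_fun fun q ↦ ?_
  rw [mul_pow, div_mul_eq_mul_div, eq_div_iff (by positivity)]
  linear_combination -y ^ q * four_pow_mul_poch_half q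

noncomputable def centralBinomMoment (k : ℕ) (y : ℝ) : ℝ :=
  ∑' q : ℕ, (q : ℝ) ^ k * Nat.centralBinom q * y ^ q

section centralBinomMoment

variable {y : ℝ}

lemma summable_centralBinomMoment (hy : |y| < 1 / 4) (k : ℕ) :
    Summable fun q : ℕ ↦ (q : ℝ) ^ k * Nat.centralBinom q * y ^ q := by
  refine Summable.of_norm_bounded (summable_pow_mul_geometric_of_norm_lt_one k
    (r := 4 * |y|) (by rw [Real.norm_eq_abs, abs_of_nonneg (by positivity)]; linarith)) fun q ↦ ?_
  have hC : (Nat.centralBinom q : ℝ) ≤ 4 ^ q := by exact_mod_cast Nat.centralBinom_le_four_pow q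
  rw [Real.norm_eq_abs, abs_mul, abs_mul, abs_pow, abs_pow, Nat.abs_cast, Nat.abs_cast, mul_pow,
    ← mul_assoc]
  gcongr

lemma hasSum_centralBinomMoment (hy : |y| < 1 / 4) (k : ℕ) :
    HasSum (fun q : ℕ ↦ (q : ℝ) ^ k * Nat.centralBinom q * y ^ q) (centralBinomMoment k y) :=
  (summable_centralBinomMoment hy k).hasSum

lemma centralBinomMoment_zero (hy : |y| < 1 / 4) :
    centralBinomMoment 0 y = 1 / √(1 - 4 * y) := by
  simpa [centralBinomMoment] using (hasSum_centralBinom_mul_pow hy).tsum_eq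

lemma succ_pow_mul_centralBinom_succ_mul_pow (k p : ℕ) (y : ℝ) :
    ((p + 1 : ℕ) : ℝ) ^ (k + 1) * Nat.centralBinom (p + 1) * y ^ (p + 1) =
      2 * y * ∑ j ∈ range (k + 1), (k.choose j : ℝ) * (2 * ((p : ℝ) ^ (j + 1) *
        Nat.centralBinom p * y ^ p) + (p : ℝ) ^ j * Nat.centralBinom p * y ^ p) := by
  calc ((p + 1 : ℕ) : ℝ) ^ (k + 1) * Nat.centralBinom (p + 1) * y ^ (p + 1)
      = 2 * y * (((p : ℝ) + 1) ^ k * ((2 * p + 1) * Nat.centralBinom p * y ^ p)) := by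
        rw [cast_centralBinom_succ]
        push_cast
        field_simp
        ring
    _ = _ := by
        rw [add_pow, sum_mul]
        refine congrArg _ (sum_congr rfl fun j _ ↦ ?_)
        ring

lemma centralBinomMoment_succ (hy : |y| < 1 / 4) (k : ℕ) :
    centralBinomMoment (k + 1) y = 2 * y * ∑ j ∈ range (k + 1), (k.choose j : ℝ) *
      (2 * centralBinomMoment (j + 1) y + centralBinomMoment j y) := by
  have hshift := (hasSum_nat_add_iff' 1).mpr (hasSum_centralBinomMoment hy (k + 1))
  simp only [range_one, sum_singleton, CharP.cast_eq_zero, ne_eq, add_eq_zero, one_ne_zero,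
    and_false, not_false_eq_true, zero_pow, zero_mul, sub_zero] at hshift
  have hsum := (hasSum_sum (s := range (k + 1)) fun j _ ↦
    (((hasSum_centralBinomMoment hy (j + 1)).mul_left 2).add
      (hasSum_centralBinomMoment hy j)).mul_left (k.choose j : ℝ)).mul_left (2 * y)
  exact hshift.unique (by simpa only [succ_pow_mul_centralBinom_succ_mul_pow] using hsum)

lemma centralBinomMoment_five (hy : |y| < 1 / 4) :
    centralBinomMoment 5 y = (2 * y + 148 * y ^ 2 + 1032 * y ^ 3 + 928 * y ^ 4 + 32 * y ^ 5) /
      (√(1 - 4 * y) * (1 - 4 * y) ^ 5) := by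
  have hs : 0 < √(1 - 4 * y) := Real.sqrt_pos.mpr (by linarith [le_abs_self y])
  have ht : 1 - 4 * y ≠ 0 := by linarith [le_abs_self y]
  have m1 := centralBinomMoment_succ hy 0
  have m2 := centralBinomMoment_succ hy 1
  have m3 := centralBinomMoment_succ hy 2
  have m4 := centralBinomMoment_succ hy 3
  have m5 := centralBinomMoment_succ hy 4
  norm_num [sum_range_succ, Nat.choose, centralBinomMoment_zero hy] at m1 m2 m3 m4 m5
  generalize √(1 - 4 * y) = s at hs m1 m2 m3 m4 m5 ⊢
  have e1 : centralBinomMoment 1 y = 2 * y / (s * (1 - 4 * y)) := by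
    rw [eq_div_iff (by positivity)]
    linear_combination (norm := skip) s * m1
    field_simp
    ring
  rw [e1] at m2 m3 m4 m5
  have e2 : centralBinomMoment 2 y = (2 * y + 4 * y ^ 2) / (s * (1 - 4 * y) ^ 2) := by
    rw [eq_div_iff (by positivity)]
    linear_combination (norm := skip) (s * (1 - 4 * y)) * m2
    field_simp
    ring
  rw [e2] at m3 m4 m5
  have e3 : centralBinomMoment 3 y = (2 * y + 20 * y ^ 2 + 8 * y ^ 3) / (s * (1 - 4 * y) ^ 3) := by
    rw [eq_div_iff (by positivity)]
    linear_combination (norm := skip) (s * (1 - 4 * y) ^ 2) * m3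
    field_simp
    ring
  rw [e3] at m4 m5
  have e4 : centralBinomMoment 4 y =
      (2 * y + 60 * y ^ 2 + 144 * y ^ 3 + 16 * y ^ 4) / (s * (1 - 4 * y) ^ 4) := by
    rw [eq_div_iff (by positivity)]
    linear_combination (norm := skip) (s * (1 - 4 * y) ^ 3) * m4
    field_simp
    ring
  rw [e4] at m5
  rw [eq_div_iff (by positivity)]
  linear_combination (norm := skip) (s * (1 - 4 * y) ^ 4) * m5
  field_simp
  ring

end centralBinomMoment

lemma hasSum_even_of_hasSum_of_hasSum_neg {𝕜 : Type*} [Field 𝕜] [CharZero 𝕜] [TopologicalSpace 𝕜]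
    [IsTopologicalRing 𝕜] {f : ℕ → 𝕜} {y a b : 𝕜} (ha : HasSum (fun q ↦ f q * y ^ q) a)
    (hb : HasSum (fun q ↦ f q * (-y) ^ q) b) :
    HasSum (fun k ↦ f (2 * k) * y ^ (2 * k)) ((a + b) / 2) := by
  have hodd : ∀ q ∉ Set.range (2 * ·), f q * y ^ q + f q * (-y) ^ q = 0 := by
    intro q hq
    have : Odd q := Nat.not_even_iff_odd.mp fun ⟨k, hk⟩ ↦ hq ⟨k, by simp [hk, two_mul]⟩
    rw [this.neg_pow]
    ring
  have h := ((mul_right_injective₀ two_ne_zero).hasSum_iff hodd).mpr (ha.add hb)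
  refine (h.div_const 2).congr_fun fun k ↦ ?_
  simp only [Function.comp_apply, (even_two_mul k).neg_pow]
  ring

lemma sixF5_summand_eq (n : ℕ) :
    poch (5/4) n * poch (7/4) n * (poch 2 n)^4
        / ((poch 1 n)^4 * poch (3/2) n * (Nat.factorial n)) * (1/4 : ℝ) ^ n =
      ((2 * (n + 1) : ℕ) : ℝ) ^ 5 * Nat.centralBinom (2 * (n + 1)) * (1 / 8) ^ (2 * (n + 1)) / 3 := by
  induction n with
  | zero => norm_num [poch, Nat.centralBinom, Nat.choose]
  | succ n ih =>
    have hp := fun a (ha : (0:ℝ) < a) ↦ (poch_pos ha n).ne'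
    calc _ = (poch (5/4) n * poch (7/4) n * (poch 2 n)^4
        / ((poch 1 n)^4 * poch (3/2) n * (Nat.factorial n)) * (1/4 : ℝ) ^ n) *
          ((5/4 + n) * (7/4 + n) * (2 + n) ^ 4 / ((1 + n) ^ 4 * (3/2 + n) * (n + 1) * 4)) := by
          rw [poch_succ, poch_succ, poch_succ, poch_succ, poch_succ, Nat.factorial_succ, pow_succ]
          field_simp [hp (5/4) (by norm_num), hp (7/4) (by norm_num), hp 2 two_pos, hp 1 one_pos,
            hp (3/2) (by norm_num)]
          push_cast
          ring
      _ = _ := by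
        rw [ih, show 2 * (n + 1 + 1) = 2 * (n + 1) + 1 + 1 by ring,
          cast_centralBinom_succ (2 * (n + 1) + 1), cast_centralBinom_succ (2 * (n + 1)),
          pow_succ _ (2 * (n + 1) + 1), pow_succ _ (2 * (n + 1))]
        push_cast
        field_simp
        ring

theorem sixF5_quarter_value :
    ∑' n : ℕ,
        poch (5/4) n * poch (7/4) n * (poch 2 n)^4
          / ((poch 1 n)^4 * poch (3/2) n * (Nat.factorial n)) * (1/4 : ℝ) ^ n =
      31 / (2592 * Real.sqrt 6) + 4921 / (96 * Real.sqrt 2) := by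
  have hy : |(1 / 8 : ℝ)| < 1 / 4 := by norm_num [abs_of_pos]
  have hy' : |-(1 / 8 : ℝ)| < 1 / 4 := by rwa [abs_neg]
  have heven := hasSum_even_of_hasSum_of_hasSum_neg (hasSum_centralBinomMoment hy 5)
    (hasSum_centralBinomMoment hy' 5)
  have hshift := (hasSum_nat_add_iff' 1).mpr heven
  simp only [range_one, sum_singleton, mul_zero, CharP.cast_eq_zero, ne_eq, OfNat.ofNat_ne_zero,
    not_false_eq_true, zero_pow, zero_mul, sub_zero] at hshift
  have hs2 : √(1 - 4 * (1 / 8 : ℝ)) = √2 / 2 := by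
    rw [Real.sqrt_eq_iff_mul_self_eq_of_pos (by positivity)]
    ring_nf
    norm_num
  have hs6 : √(1 - 4 * (-(1 / 8) : ℝ)) = √6 / 2 := by
    rw [Real.sqrt_eq_iff_mul_self_eq_of_pos (by positivity)]
    ring_nf
    norm_num
  rw [tsum_congr sixF5_summand_eq, (hshift.div_const 3).tsum_eq, centralBinomMoment_five hy,
    centralBinomMoment_five hy', hs2, hs6]
  field_simp
  ring
end
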